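/- arXiv:1701.00784 — 3 statements merged into one kernel-verified Lean document; each statement's English description precedes it below -/
import Mathlib

section
/- The quotient of the additive group (Fin 4 → ℤ) by the range of the additive homomorphism x ↦ K_{SO(8)}.mulVec x is isomorphic as an additive group to ZMod 2 × ZMod 2. In particular every element of the quotient satisfies x + x = 0 and the quotient has exactly 4 elements. -/
/-!
The parity map `x ↦ (x₁ + x₂, x₁ + x₃) mod 2` is a surjection `ℤ⁴ → (ℤ/2)²` that kills every
column of `K_{SO(8)}`. Conversely, a vector with both parities even is hit by `K_{SO(8)}`: the last
three rows give `2 yᵢ = xᵢ + y₀`, and the first row then forces `y₀ = 2 x₀ + x₁ + x₂ + x₃`.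
Hence `ℤ⁴ / K ℤ⁴` is the quotient of `ℤ⁴` by the kernel of the parity map, i.e. `(ℤ/2)²`.
-/

open Matrix

/-- The K-matrix of the `efmf` surface topological order: the Cartan matrix of
SO(8) (type D4), over ℤ. -/
def KSO8 : Matrix (Fin 4) (Fin 4) ℤ :=
  !![2, -1, -1, -1;
     -1, 2, 0, 0;
     -1, 0, 2, 0;
     -1, 0, 0, 2]

abbrev Matrix.anyonGroup {n : Type*} [Fintype n] (K : Matrix n n ℤ) :=
  (n → ℤ) ⧸ K.mulVecLin.toAddMonoidHom.range

noncomputable def Matrix.anyonGroupEquivOfRangeEqKer {n H : Type*} [Fintype n] [AddGroup H]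
    (K : Matrix n n ℤ) (f : (n → ℤ) →+ H) (hf : Function.Surjective f)
    (hK : K.mulVecLin.toAddMonoidHom.range = f.ker) : K.anyonGroup ≃+ H :=
  (QuotientAddGroup.quotientAddEquivOfEq hK).trans
    (QuotientAddGroup.quotientKerEquivOfSurjective f hf)

theorem add_self_eq_zero_of_addEquiv {A R : Type*} [AddGroup A] [Ring R] [CharP R 2]
    (e : A ≃+ R) (a : A) : a + a = 0 :=
  e.injective (by rw [map_add, map_zero, CharTwo.add_self_eq_zero])

namespace KSO8

theorem mulVec_eq (y : Fin 4 → ℤ) :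
    KSO8 *ᵥ y = ![2 * y 0 - y 1 - y 2 - y 3, -y 0 + 2 * y 1, -y 0 + 2 * y 2, -y 0 + 2 * y 3] := by
  ext i
  fin_cases i <;> simp [KSO8, mulVec, dotProduct, Fin.sum_univ_four]
  ring

def charge : (Fin 4 → ℤ) →+ ZMod 2 × ZMod 2 :=
  AddMonoidHom.mk' (fun x ↦ (((x 1 + x 2 : ℤ) : ZMod 2), ((x 1 + x 3 : ℤ) : ZMod 2)))
    fun x y ↦ by ext <;> simp only [Pi.add_apply, Int.cast_add, Prod.fst_add, Prod.snd_add] <;> ring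

theorem charge_apply (x : Fin 4 → ℤ) :
    charge x = (((x 1 + x 2 : ℤ) : ZMod 2), ((x 1 + x 3 : ℤ) : ZMod 2)) :=
  rfl

theorem charge_eq_zero_iff (x : Fin 4 → ℤ) :
    charge x = 0 ↔ Even (x 1 + x 2) ∧ Even (x 1 + x 3) := by
  rw [charge_apply, Prod.mk_eq_zero, ZMod.intCast_eq_zero_iff_even, ZMod.intCast_eq_zero_iff_even]

theorem charge_surjective : Function.Surjective charge := by
  rintro ⟨u, v⟩
  refine ⟨![0, 0, u.val, v.val], ?_⟩
  simp [charge_apply]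

theorem charge_mulVec (y : Fin 4 → ℤ) : charge (KSO8 *ᵥ y) = 0 := by
  rw [charge_eq_zero_iff, mulVec_eq]
  exact ⟨⟨y 1 + y 2 - y 0, by simp only [cons_val_one, cons_val_zero, cons_val]; ring⟩,
    ⟨y 1 + y 3 - y 0, by simp only [cons_val_one, cons_val_zero, cons_val]; ring⟩⟩

theorem exists_mulVec_eq_of_charge_eq_zero {x : Fin 4 → ℤ} (hx : charge x = 0) :
    ∃ y, KSO8 *ᵥ y = x := by
  obtain ⟨⟨a, ha⟩, ⟨b, hb⟩⟩ := (charge_eq_zero_iff x).1 hx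
  refine ⟨![2 * x 0 + x 1 + x 2 + x 3, x 0 + a + b, x 0 + x 2 + b, x 0 + x 3 + a], ?_⟩
  rw [mulVec_eq]
  ext i
  fin_cases i <;> simp <;> omega

theorem range_mulVecLin_eq_ker_charge : KSO8.mulVecLin.toAddMonoidHom.range = charge.ker := by
  ext x
  rw [AddMonoidHom.mem_ker]
  exact ⟨fun ⟨y, hy⟩ ↦ hy ▸ charge_mulVec y, exists_mulVec_eq_of_charge_eq_zero⟩

noncomputable def anyonGroupEquiv : KSO8.anyonGroup ≃+ ZMod 2 × ZMod 2 :=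
  anyonGroupEquivOfRangeEqKer KSO8 charge charge_surjective range_mulVecLin_eq_ker_charge

end KSO8

/-- The anyon group `ℤ⁴ / K_{SO(8)} ℤ⁴` is isomorphic to `ZMod 2 × ZMod 2`;
in particular every element is 2-torsion and there are exactly 4 anyons. -/
theorem KSO8_anyon_group :
    Nonempty
      (((Fin 4 → ℤ) ⧸ (KSO8.mulVecLin.toAddMonoidHom).range) ≃+ ZMod 2 × ZMod 2) ∧
    (∀ x : (Fin 4 → ℤ) ⧸ (KSO8.mulVecLin.toAddMonoidHom).range, x + x = 0) ∧
    Nat.card ((Fin 4 → ℤ) ⧸ (KSO8.mulVecLin.toAddMonoidHom).range) = 4 := by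
  refine ⟨⟨KSO8.anyonGroupEquiv⟩, add_self_eq_zero_of_addEquiv KSO8.anyonGroupEquiv, ?_⟩
  rw [Nat.card_congr KSO8.anyonGroupEquiv.toEquiv]
  simp
end

section
/- Let N ≥ 1 be a natural number and M_e an integer. In the ℚ-vector space Fin 4 → ℚ, let Λ be the ℤ-submodule spanned by the four vectors ![1,0,0,0], ![0,1,0,0], ![0,0,0,1], and ![0, 1/N, 1/N, 0]. Then the vector ![0, -1/N, 2*M_e/N, 0] belongs to Λ if and only if (N : ℤ) divides 2*M_e + 1. Consequently, if N is even this vector lies outside Λ for every integer M_e, while if N is odd there exists an integer M_e for which it lies in Λ. -/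
set_option linter.unnecessarySeqFocus false in
lemma mem_iff_key (N : ℕ) (hN : 1 ≤ N) (M_e : ℤ) :
    (![0, -1/(N : ℚ), (2 * (M_e : ℚ))/(N : ℚ), 0] ∈
      Submodule.span ℤ
        ({![1, 0, 0, 0], ![0, 1, 0, 0], ![0, 0, 0, 1],
          ![0, 1/(N : ℚ), 1/(N : ℚ), 0]} : Set (Fin 4 → ℚ)))
    ↔ (N : ℤ) ∣ 2 * M_e + 1 := by
  have hN0 : (N : ℚ) ≠ 0 := by positivity
  constructor
  · intro h
    rw [Submodule.mem_span_insert] at h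
    obtain ⟨a, x1, hx1, hx⟩ := h
    rw [Submodule.mem_span_insert] at hx1
    obtain ⟨b, x2, hx2, hx1⟩ := hx1
    rw [Submodule.mem_span_insert] at hx2
    obtain ⟨c, x3, hx3, hx2⟩ := hx2
    rw [Submodule.mem_span_singleton] at hx3
    obtain ⟨d, hd⟩ := hx3
    subst hd hx2 hx1
    have h2 := congrFun hx 2
    have h1 := congrFun hx 1
    simp [Pi.add_apply, Pi.smul_apply, Matrix.cons_val_one, Matrix.head_cons,
      zsmul_eq_mul] at h1 h2
    field_simp at h1 h2
    refine ⟨-b, ?_⟩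
    have : (2 * (M_e : ℚ) + 1 : ℚ) = (N : ℚ) * (-(b : ℚ)) := by linarith
    exact_mod_cast this
  · rintro ⟨k, hk⟩
    have hv : ![0, -1/(N : ℚ), (2 * (M_e : ℚ))/(N : ℚ), 0] =
        (-k) • ![0, 1, 0, 0] + (2 * M_e) • ![0, 1/(N : ℚ), 1/(N : ℚ), 0] := by
      have hkQ : 2 * (M_e : ℚ) + 1 = (N : ℚ) * (k : ℚ) := by exact_mod_cast hk
      funext i
      fin_cases i <;> simp [zsmul_eq_mul] <;> field_simp <;> linarith
    rw [hv]
    refine Submodule.add_mem _ (Submodule.smul_mem _ _ (Submodule.subset_span ?_))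
      (Submodule.smul_mem _ _ (Submodule.subset_span ?_)) <;> simp



/-- Anomaly diagnosis for the `e𝒢_y𝒯mC` surface topological order of the
bosonic `U(1)⋊Z₂ᵀ` GSPT phase: with `Λ` the anyon lattice of the gauged theory
(the ℤ-span of `m`, `e`, the local boson, and the `Z_N` symmetry defect
`(0, 1/N, 1/N, 0)`), the glide image `(0, -1/N, 2Mₑ/N, 0)` of the symmetry
defect lies in `Λ` iff `N ∣ 2Mₑ + 1`; hence it is never in `Λ` when `N` is even,
while for odd `N` a suitable `Mₑ` puts it in `Λ`. -/
theorem glide_anomaly_eGTmC (N : ℕ) (hN : 1 ≤ N) :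
    (∀ M_e : ℤ,
      (![0, -1/(N : ℚ), (2 * (M_e : ℚ))/(N : ℚ), 0] ∈
        Submodule.span ℤ
          ({![1, 0, 0, 0], ![0, 1, 0, 0], ![0, 0, 0, 1],
            ![0, 1/(N : ℚ), 1/(N : ℚ), 0]} : Set (Fin 4 → ℚ)))
      ↔ (N : ℤ) ∣ 2 * M_e + 1) ∧
    (Even N → ∀ M_e : ℤ,
      ![0, -1/(N : ℚ), (2 * (M_e : ℚ))/(N : ℚ), 0] ∉
        Submodule.span ℤ
          ({![1, 0, 0, 0], ![0, 1, 0, 0], ![0, 0, 0, 1],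
            ![0, 1/(N : ℚ), 1/(N : ℚ), 0]} : Set (Fin 4 → ℚ))) ∧
    (Odd N → ∃ M_e : ℤ,
      ![0, -1/(N : ℚ), (2 * (M_e : ℚ))/(N : ℚ), 0] ∈
        Submodule.span ℤ
          ({![1, 0, 0, 0], ![0, 1, 0, 0], ![0, 0, 0, 1],
            ![0, 1/(N : ℚ), 1/(N : ℚ), 0]} : Set (Fin 4 → ℚ))) := by
  refine ⟨fun M_e => mem_iff_key N hN M_e, ?_, ?_⟩
  · intro hEven M_e h
    have hdvd := (mem_iff_key N hN M_e).mp h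
    have h2 : (2 : ℤ) ∣ (N : ℤ) := by exact_mod_cast hEven.two_dvd
    have : (2 : ℤ) ∣ 2 * M_e + 1 := h2.trans hdvd
    omega
  · rintro ⟨m, hm⟩
    refine ⟨m, (mem_iff_key N hN m).mpr ⟨1, ?_⟩⟩
    omega
end

section
/- Let N be an even natural number with N ≥ 4, and let k, M_e be integers with 4 ∣ k. In the ℚ-vector space Fin 4 → ℚ, let Λ' be the ℤ-submodule spanned by the four vectors ![1,0,0,0], ![0,1,0,0], ![0,0,1,0], and ![2/N, 0, 1/N, -1/N]. Then the vector ![-2/N, k/N, (4*M_e+1)/N, (1-4*M_e)/N] does not belong to Λ'. -/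
/-- Anomaly diagnosis for the class AII (hourglass-fermion) surface topological
order: with `Λ'` the anyon lattice of the gauged theory (the ℤ-span of `m`, `e`,
the electron `ψ_R`, and the `Z_N` symmetry defect `(2/N, 0, 1/N, -1/N)`), the
glide image `(-2/N, k/N, (4Mₑ+1)/N, (1-4Mₑ)/N)` of the symmetry defect lies
outside `Λ'` for every even `N ≥ 4`, every `k ≡ 0 mod 4` and every `Mₑ ∈ ℤ`. -/
theorem glide_anomaly_classAII (N : ℕ) (hN : Even N) (hN4 : 4 ≤ N)
    (k M_e : ℤ) (hk : 4 ∣ k) :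
    ![-2/(N : ℚ), (k : ℚ)/(N : ℚ), (4 * (M_e : ℚ) + 1)/(N : ℚ),
        (1 - 4 * (M_e : ℚ))/(N : ℚ)] ∉
      Submodule.span ℤ
        ({![1, 0, 0, 0], ![0, 1, 0, 0], ![0, 0, 1, 0],
          ![2/(N : ℚ), 0, 1/(N : ℚ), -1/(N : ℚ)]} : Set (Fin 4 → ℚ)) := by
  intro h
  have hN0 : (N : ℚ) ≠ 0 := by
    have : 0 < N := by omega
    exact_mod_cast this.ne'
  rw [Submodule.mem_span_insert] at h
  obtain ⟨a, z, hz, hv⟩ := h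
  rw [Submodule.mem_span_insert] at hz
  obtain ⟨b, z2, hz2, hz'⟩ := hz
  rw [Submodule.mem_span_insert] at hz2
  obtain ⟨c, z3, hz3, hz2'⟩ := hz2
  rw [Submodule.mem_span_singleton] at hz3
  obtain ⟨d, hz3'⟩ := hz3
  subst hz3' hz2' hz'
  have h3 := congrFun hv 3
  have h2 := congrFun hv 2
  simp [Matrix.cons_val_zero, Matrix.cons_val_one, Matrix.head_cons,
    Pi.add_apply, Pi.smul_apply, zsmul_eq_mul] at h3 h2
  -- h3 : (1 - 4*M_e)/N = d * (-1/N) (plus zero terms)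
  have hd : (d : ℚ) = 4 * (M_e : ℚ) - 1 := by
    field_simp at h3
    linarith
  have hc : (c : ℚ) * (N : ℚ) = 2 := by
    field_simp at h2
    rw [hd] at h2
    linarith
  have hcz : (c : ℤ) * (N : ℤ) = 2 := by exact_mod_cast hc
  have : (N : ℤ) ∣ 2 := Dvd.intro c (by linarith [hcz])
  have := Int.le_of_dvd (by norm_num) this
  omega
end
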